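/- For n ≥ 5, the path P_n satisfies mvc(P_n) + mvc(complement of P_n) = n + 3. -/

import Mathlib

open SimpleGraph

/-!
If `3 < diam G`, then `Gᶜ` has diameter at most `2`: two vertices at `Gᶜ`-distance at least `3`
are `G`-adjacent and every other vertex is `G`-adjacent to one of them, which would bound the
diameter of `G` by `3`. In a graph of diameter at most `2` any two vertices are joined by a path
with at most one inner vertex, so every colouring is an MVC-colouring and `mvc (P_n)ᶜ = n`.

In `P_n` every path between the two ends passes through all inner vertices, which therefore
share a colour, so `mvc P_n ≤ 3`. Conversely, an end of `P_n` has only one neighbour and so is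
never an inner vertex of a path: colouring the two ends and the inner vertices with three
different colours gives an MVC-colouring.
-/

/-- A vertex-coloring `c` of `G` is an MVC-coloring if any two vertices are joined by a
path whose internal vertices all have the same color. -/
def IsMVCColoring {V : Type*} (G : SimpleGraph V) (c : V → ℕ) : Prop :=
  ∀ u v : V, ∃ p : G.Walk u v, p.IsPath ∧
    ∀ x ∈ p.support.tail.dropLast, ∀ y ∈ p.support.tail.dropLast, c x = c y

/-- The monochromatic vertex-connection number: the maximum number of colors
used in an MVC-coloring of `G`. -/
noncomputable def mvc {V : Type*} (G : SimpleGraph V) : ℕ :=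
  sSup {k : ℕ | ∃ c : V → ℕ, IsMVCColoring G c ∧ (Set.range c).ncard = k}

namespace SimpleGraph.Walk

variable {V : Type*} {G : SimpleGraph V} {u v x : V}

theorem mem_support_tail_dropLast_iff (p : G.Walk u v) :
    x ∈ p.support.tail.dropLast ↔ ∃ i, 0 < i ∧ i < p.length ∧ p.getVert i = x := by
  simp only [List.mem_iff_getElem, List.getElem_dropLast, List.getElem_tail,
    support_getElem_eq_getVert, List.length_dropLast, List.length_tail, length_support]
  constructor
  · rintro ⟨j, hj, rfl⟩
    exact ⟨j + 1, by omega, by omega, rfl⟩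
  · rintro ⟨i, hi0, hi, rfl⟩
    exact ⟨i - 1, by omega, by rw [Nat.sub_add_cancel hi0]⟩

theorem mem_support_tail_dropLast_of_ne (p : G.Walk u v) (hx : x ∈ p.support) (hxu : x ≠ u)
    (hxv : x ≠ v) : x ∈ p.support.tail.dropLast := by
  obtain ⟨i, rfl, hi⟩ := mem_support_iff_exists_getVert.mp hx
  refine p.mem_support_tail_dropLast_iff.mpr ⟨i, Nat.pos_of_ne_zero ?_, hi.lt_of_ne ?_, rfl⟩
  · rintro rfl
    exact hxu p.getVert_zero
  · rintro rfl
    exact hxv p.getVert_length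

theorem IsPath.notMem_support_tail_dropLast {p : G.Walk u v} (hp : p.IsPath)
    (hx : (G.neighborSet x).Subsingleton) : x ∉ p.support.tail.dropLast := by
  rw [mem_support_tail_dropLast_iff]
  rintro ⟨i, hi0, hi, rfl⟩
  have hprev : G.Adj (p.getVert i) (p.getVert (i - 1)) := by
    simpa [Nat.sub_add_cancel hi0] using (p.adj_getVert_succ (i := i - 1) (by omega)).symm
  have := hp.getVert_injOn (by simp; omega) (by simp; omega)
    (hx hprev (p.adj_getVert_succ hi))
  omega

theorem mem_support_tail_dropLast_eq_of_length_le_two {p : G.Walk u v} (hp : p.length ≤ 2)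
    {y : V} (hx : x ∈ p.support.tail.dropLast) (hy : y ∈ p.support.tail.dropLast) : x = y := by
  obtain ⟨i, hi0, hi, rfl⟩ := p.mem_support_tail_dropLast_iff.mp hx
  obtain ⟨j, hj0, hj, rfl⟩ := p.mem_support_tail_dropLast_iff.mp hy
  rw [show i = j by omega]

end SimpleGraph.Walk

section MVC

variable {V : Type*} {G : SimpleGraph V}

theorem isMVCColoring_of_ediam_le_two (h : G.ediam ≤ 2) (c : V → ℕ) : IsMVCColoring G c := by
  intro u v
  have huv : G.edist u v ≤ 2 := edist_le_ediam.trans h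
  have hr : G.Reachable u v := reachable_of_edist_ne_top (ne_top_of_le_ne_top (by simp) huv)
  obtain ⟨p, hp, hlen⟩ := hr.exists_path_of_dist
  have hlen2 : p.length ≤ 2 := by
    rw [← hr.coe_dist_eq_edist, ← hlen] at huv
    exact_mod_cast huv
  exact ⟨p, hp, fun x hx y hy =>
    congrArg c (Walk.mem_support_tail_dropLast_eq_of_length_le_two hlen2 hx hy)⟩

theorem isMVCColoring_of_subsingleton_or_eq (hG : G.Preconnected) {c : V → ℕ} {a : ℕ}
    (hc : ∀ x, (G.neighborSet x).Subsingleton ∨ c x = a) : IsMVCColoring G c := by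
  intro u v
  obtain ⟨p, hp⟩ := (hG u v).exists_isPath
  have hcolor : ∀ x ∈ p.support.tail.dropLast, c x = a := fun x hx =>
    (hc x).resolve_left fun hsub => hp.notMem_support_tail_dropLast hsub hx
  exact ⟨p, hp, fun x hx y hy => (hcolor x hx).trans (hcolor y hy).symm⟩

theorem ncard_range_le_card [Finite V] (c : V → ℕ) : (Set.range c).ncard ≤ Nat.card V := by
  rw [← Nat.card_coe_set_eq]
  exact Finite.card_range_le c

theorem ncard_range_le_mvc [Finite V] {c : V → ℕ} (hc : IsMVCColoring G c) :
    (Set.range c).ncard ≤ mvc G := by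
  refine le_csSup ⟨Nat.card V, ?_⟩ ⟨c, hc, rfl⟩
  rintro _ ⟨c', -, rfl⟩
  exact ncard_range_le_card c'

theorem mvc_le {k : ℕ} (h : ∀ c, IsMVCColoring G c → (Set.range c).ncard ≤ k) :
    mvc G ≤ k :=
  csSup_le' <| by
    rintro _ ⟨c, hc, rfl⟩
    exact h c hc

theorem mvc_eq_card_of_ediam_le_two [Finite V] (h : G.ediam ≤ 2) : mvc G = Nat.card V := by
  refine le_antisymm (mvc_le fun c _ => ncard_range_le_card c) ?_
  obtain ⟨f, hf⟩ := Countable.exists_injective_nat V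
  rw [← Set.ncard_range_of_injective hf]
  exact ncard_range_le_mvc (isMVCColoring_of_ediam_le_two h f)

end MVC

theorem ediam_compl_le_two_of_three_lt_ediam {V : Type*} {G : SimpleGraph V}
    (h : 3 < G.ediam) : Gᶜ.ediam ≤ 2 := by
  refine ediam_le_of_edist_le fun u v => ?_
  by_contra! huv
  obtain ⟨hne, hnadj, hcommon⟩ := two_lt_edist_iff.mp huv
  have hadj : G.Adj u v := by simpa [compl_adj, hne] using hnadj
  have hnear : ∀ w, ∃ s, (s = u ∨ s = v) ∧ G.edist w s ≤ 1 := by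
    intro w
    by_contra! hw
    have hwu := (hw u (.inl rfl)).not_ge
    have hwv := (hw v (.inr rfl)).not_ge
    rw [edist_le_one_iff_adj_or_eq, not_or] at hwu hwv
    have : w ∈ Gᶜ.commonNeighbors u v := by
      simp only [mem_commonNeighbors, compl_adj, G.adj_comm u, G.adj_comm v]
      exact ⟨⟨Ne.symm hwu.2, hwu.1⟩, Ne.symm hwv.2, hwv.1⟩
    simp [hcommon] at this
  have hclose : ∀ s t, (s = u ∨ s = v) → (t = u ∨ t = v) → G.edist s t ≤ 1 := by
    rintro s t (rfl | rfl) (rfl | rfl) <;> simp [edist_le_one_iff_adj_or_eq, hadj, hadj.symm]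
  refine h.not_ge (ediam_le_of_edist_le fun a b => ?_)
  obtain ⟨s, hs, has⟩ := hnear a
  obtain ⟨t, ht, hbt⟩ := hnear b
  calc G.edist a b ≤ G.edist a s + G.edist s t + G.edist t b :=
        SimpleGraph.edist_triangle.trans (add_le_add_left SimpleGraph.edist_triangle _)
    _ ≤ 1 + 1 + 1 := by
        gcongr
        · exact hclose s t hs ht
        · rwa [SimpleGraph.edist_comm]
    _ = 3 := by norm_num

section PathGraph

variable {n : ℕ}

theorem pathGraph_walk_exists_mem_support_val_eq {u v : Fin n} (p : (pathGraph n).Walk u v)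
    {k : ℕ} (hlo : min ↑u ↑v ≤ k) (hhi : k ≤ max ↑u ↑v) :
    ∃ x ∈ p.support, (x : ℕ) = k := by
  induction p with
  | @nil a => exact ⟨a, by simp, by omega⟩
  | @cons a b d h q ih =>
    have hadj := pathGraph_adj.mp h
    by_cases hk : k = a
    · exact ⟨a, by simp, hk.symm⟩
    · obtain ⟨x, hx, hxk⟩ := ih (by omega) (by omega)
      exact ⟨x, by simp [hx], hxk⟩

theorem pathGraph_walk_val_le_add_length {u v : Fin n} (p : (pathGraph n).Walk u v) :
    (v : ℕ) ≤ u + p.length := by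
  induction p with
  | nil => simp
  | cons h q ih =>
    have := pathGraph_adj.mp h
    simp only [Walk.length_cons]
    omega

theorem three_lt_ediam_pathGraph (hn : 5 ≤ n) : 3 < (pathGraph n).ediam := by
  obtain ⟨p, hp⟩ :=
    (pathGraph_preconnected n ⟨0, by omega⟩ ⟨n - 1, by omega⟩).exists_walk_length_eq_edist
  have hlen : n - 1 ≤ p.length := by simpa using pathGraph_walk_val_le_add_length p
  calc (3 : ℕ∞) < p.length := by exact_mod_cast (show 3 < p.length by omega)
    _ = _ := hp
    _ ≤ _ := edist_le_ediam

theorem neighborSet_pathGraph_subsingleton {x : Fin n} (hx : (x : ℕ) = 0 ∨ (x : ℕ) = n - 1) :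
    ((pathGraph n).neighborSet x).Subsingleton := by
  intro y hy z hz
  simp only [mem_neighborSet, pathGraph_adj] at hy hz
  ext
  omega

theorem ncard_range_le_three_of_isMVCColoring_pathGraph (hn : 2 ≤ n) {c : Fin n → ℕ}
    (hc : IsMVCColoring (pathGraph n) c) : (Set.range c).ncard ≤ 3 := by
  let first : Fin n := ⟨0, by omega⟩
  let second : Fin n := ⟨1, by omega⟩
  let last : Fin n := ⟨n - 1, by omega⟩
  obtain ⟨p, -, hmono⟩ := hc first last
  have hinterior :
      ∀ x : Fin n, 0 < (x : ℕ) → (x : ℕ) < n - 1 → x ∈ p.support.tail.dropLast := by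
    intro x h0 hlast
    obtain ⟨y, hy, hyx⟩ := pathGraph_walk_exists_mem_support_val_eq p (k := x) (by simp [first])
      (by simp [first, last]; omega)
    rw [Fin.ext hyx] at hy
    exact p.mem_support_tail_dropLast_of_ne hy (Fin.ne_of_val_ne (by simp [first]; omega))
      (Fin.ne_of_val_ne (by simp [last]; omega))
  have hsub : Set.range c ⊆ {c first, c second, c last} := by
    rintro _ ⟨x, rfl⟩
    by_cases h0 : (x : ℕ) = 0
    · simp [show x = first from Fin.ext h0]
    by_cases hlast : (x : ℕ) = n - 1
    · simp [show x = last from Fin.ext hlast]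
    · simp [hmono x (hinterior x (by omega) (by omega)) second
        (hinterior second (by simp [second]) (by simp [second]; omega))]
  calc (Set.range c).ncard ≤ ({c first, c second, c last} : Set ℕ).ncard :=
        Set.ncard_le_ncard hsub (Set.toFinite _)
    _ ≤ 3 := by
        rw [← Finset.coe_pair, ← Finset.coe_insert, Set.ncard_coe_finset]
        exact Finset.card_le_three

theorem mvc_pathGraph (hn : 3 ≤ n) : mvc (pathGraph n) = 3 := by
  refine le_antisymm (mvc_le fun c hc => ncard_range_le_three_of_isMVCColoring_pathGraph
    (by omega) hc) ?_
  let c : Fin n → ℕ := fun x => if (x : ℕ) = 0 then 0 else if (x : ℕ) = n - 1 then 1 else 2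
  have hc : IsMVCColoring (pathGraph n) c := by
    refine isMVCColoring_of_subsingleton_or_eq (pathGraph_preconnected n) (a := 2) fun x => ?_
    by_cases hx : (x : ℕ) = 0 ∨ (x : ℕ) = n - 1
    · exact .inl (neighborSet_pathGraph_subsingleton hx)
    · simp [c, (not_or.mp hx).1, (not_or.mp hx).2]
  have hsub : ({0, 1, 2} : Set ℕ) ⊆ Set.range c := by
    rintro _ (rfl | rfl | rfl)
    · exact ⟨⟨0, by omega⟩, by simp [c]⟩
    · exact ⟨⟨n - 1, by omega⟩, by simp [c]; omega⟩
    · exact ⟨⟨1, by omega⟩, by simp [c]; omega⟩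
  calc 3 = ({0, 1, 2} : Set ℕ).ncard := by simp
    _ ≤ (Set.range c).ncard := Set.ncard_le_ncard hsub (Set.toFinite _)
    _ ≤ mvc (pathGraph n) := ncard_range_le_mvc hc

theorem mvc_compl_pathGraph (hn : 5 ≤ n) : mvc (pathGraph n)ᶜ = n := by
  rw [mvc_eq_card_of_ediam_le_two
    (ediam_compl_le_two_of_three_lt_ediam (three_lt_ediam_pathGraph hn)), Nat.card_fin]

end PathGraph

theorem stmt_16 (n : ℕ) (hn : 5 ≤ n) :
    mvc (SimpleGraph.pathGraph n) + mvc (SimpleGraph.pathGraph n)ᶜ = n + 3 := by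
  rw [mvc_pathGraph (by omega), mvc_compl_pathGraph hn, add_comm]
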